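/- arXiv:1112.3477 — 4 statements merged into one kernel-verified Lean document; each statement's English description precedes it below -/
import Mathlib

section
/- Assume c is admissible with 1/3 ≤ c ≤ 0.3465, assume that every digraph of order N with minimum semi-degree at least 0.343545·N contains a directed cycle of length at most 3, and assume that every oriented graph of order N with minimum semi-degree at least N/3 is strongly connected with diameter at most 4. Let d ≥ 1 be an integer and let D be a triangle-free oriented graph of minimum semi-degree at least d and order n; put m = n/d and suppose m ≤ 3. Then every vertex x of D lies on more than ((11 − 15c + 7c² − c³ − (c² − 3c + 3)·m)/((1 − c)²(2 − c)))·d directed 4-cycles. -/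
/-!
An oriented triangle-free graph has no directed cycle of length at most 3, so the hypothesis
about semi-degree `0.343545 N` forces `d < 0.343545 n`, i.e. `m > 2.91`; in this range the
coefficient of `d` is below `2`, and it suffices to find `2d²` four-cycles through `x`.

With `P = N⁺(x)`, `M = N⁻(x)`, `p = |P|`, `q = |M|`, the 4-cycles through `x` are counted by
`∑_b u(b) v(b)`, where `u(b) = |N⁻(b) ∩ P|` and `v(b) = |N⁺(b) ∩ M|`. Summing
`(p - u(b)) (q - v(b)) ≥ 0` over all `b` gives `∑ u v ≥ q ∑ u + p ∑ v - pqn + slack`. By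
triangle-freeness `u` vanishes on `M ∪ {x}` and `v` on `P ∪ {x}`, so the slack on `P ∪ M ∪ {x}`
is explicit; together with `∑ u ≥ pd`, `∑ v ≥ qd` and the fact that `P` and `M` span at most
`p(p-1)/2` and `q(q-1)/2` arcs, this gives `∑ u v ≥ pq (2d - n + (p + q)/2 + 2) ≥ 2d²`
whenever `n ≤ 3d`.
-/

/-- A digraph is modeled as an irreflexive relation `G` on a finite vertex type.
`outDeg G x` is the out-degree of `x`. -/
noncomputable def outDeg {V : Type} (G : V → V → Prop) (x : V) : ℕ := {y | G x y}.ncard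

/-- In-degree of `x`. -/
noncomputable def inDeg {V : Type} (G : V → V → Prop) (x : V) : ℕ := {y | G y x}.ncard

/-- `G` is an oriented graph: no digons (hence also no loops). -/
def Oriented {V : Type} (G : V → V → Prop) : Prop := ∀ x y, G x y → ¬ G y x

/-- `G` contains a directed cycle of length at most 3 (a digon or a directed triangle;
for loopless digraphs the listed vertices are automatically distinct). -/
def HasCycleLe3 {V : Type} (G : V → V → Prop) : Prop :=
  (∃ x y, G x y ∧ G y x) ∨ ∃ x y z, G x y ∧ G y z ∧ G z x

/-- `G` contains a directed triangle. -/
def HasTriangle {V : Type} (G : V → V → Prop) : Prop := ∃ x y z, G x y ∧ G y z ∧ G z x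

/-- `c` is admissible: every digraph of order `N` with minimum out-degree at least `c·N`
contains a directed cycle of length at most 3. -/
def Admissible (c : ℝ) : Prop :=
  ∀ (W : Type) [Fintype W] (H : W → W → Prop), Irreflexive H →
    (∀ w, c * (Fintype.card W : ℝ) ≤ (outDeg H w : ℝ)) → HasCycleLe3 H

/-- `G` is strongly connected. -/
def StronglyConnected {V : Type} (G : V → V → Prop) : Prop :=
  ∀ x y : V, Relation.ReflTransGen G x y

/-- The digraph obtained from `G` by deleting the vertex set `S` is strongly connected. -/
def DelStrong {V : Type} (G : V → V → Prop) (S : Set V) : Prop :=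
  ∀ x ∉ S, ∀ y ∉ S, Relation.ReflTransGen (fun a b => G a b ∧ a ∉ S ∧ b ∉ S) x y

/-- The strong connectivity of `G`: the least cardinality of a set `S` of vertices such
that `G − S` is not strongly connected (`0` if `G` itself is not strongly connected). -/
noncomputable def strongConn {V : Type} (G : V → V → Prop) : ℕ :=
  sInf {k : ℕ | ∃ S : Set V, S.ncard = k ∧ ¬ DelStrong G S}

/-- The triple `t = (a, b, c)` encodes the directed 4-cycle `x → a → b → c → x`
through `x`, with the four vertices pairwise distinct. -/
def FourCycleAt {V : Type} (G : V → V → Prop) (x : V) (t : V × V × V) : Prop :=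
  G x t.1 ∧ G t.1 t.2.1 ∧ G t.2.1 t.2.2 ∧ G t.2.2 x ∧
    x ≠ t.1 ∧ x ≠ t.2.1 ∧ x ≠ t.2.2 ∧ t.1 ≠ t.2.1 ∧ t.1 ≠ t.2.2 ∧ t.2.1 ≠ t.2.2

/-- The vertex set of the 4-cycle through `x` encoded by `t`. -/
def cycVertsAt {V : Type} (x : V) (t : V × V × V) : Set V := {x, t.1, t.2.1, t.2.2}

/-- There is a directed walk of length exactly `p` from `x` to `y` in `G`. -/
def ReachIn {V : Type} (G : V → V → Prop) (p : ℕ) (x y : V) : Prop :=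
  ∃ f : ℕ → V, f 0 = x ∧ f p = y ∧ ∀ i < p, G (f i) (f (i + 1))

/-- Directed distance from `x` to `y` (length of a shortest directed path). -/
noncomputable def ddist {V : Type} (G : V → V → Prop) (x y : V) : ℕ :=
  sInf {p : ℕ | ReachIn G p x y}

/-- The number of arcs of `G`. -/
noncomputable def numArcs {V : Type} (G : V → V → Prop) : ℕ := {p : V × V | G p.1 p.2}.ncard

/-- The minimum out-degree `δ⁺(G)`. -/
noncomputable def minOutDeg {V : Type} (G : V → V → Prop) : ℕ :=
  sInf {k : ℕ | ∃ v, outDeg G v = k}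

/-- The minimum in-degree `δ⁻(G)`. -/
noncomputable def minInDeg {V : Type} (G : V → V → Prop) : ℕ :=
  sInf {k : ℕ | ∃ v, inDeg G v = k}

/-- The minimum semi-degree `δ⁰(G)`. -/
noncomputable def minSemiDeg {V : Type} (G : V → V → Prop) : ℕ :=
  sInf {k : ℕ | ∃ v, min (outDeg G v) (inDeg G v) = k}

/-- The number of unordered pairs of distinct non-adjacent vertices of `G`. -/
noncomputable def nonAdjPairs {V : Type} (G : V → V → Prop) : ℕ :=
  {s : Sym2 V | ∃ x y : V, s = s(x, y) ∧ x ≠ y ∧ ¬ G x y ∧ ¬ G y x}.ncard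

open Finset

section FourCycles

variable {V : Type} {G : V → V → Prop}

theorem Oriented.irrefl (hor : Oriented G) (a : V) : ¬ G a a := fun h => hor a a h h

theorem Oriented.swap (hor : Oriented G) : Oriented (fun a b => G b a) :=
  fun a b hab hba => hor b a hab hba

theorem not_hasCycleLe3_of_oriented (hor : Oriented G) (htf : ¬ HasTriangle G) :
    ¬ HasCycleLe3 G := by
  rintro (⟨a, b, hab, hba⟩ | htri)
  · exact hor a b hab hba
  · exact htf htri

theorem natCast_lt_mul_card_of_not_hasCycleLe3 [Fintype V] {α : ℝ}
    (hforce : ∀ (W : Type) [Fintype W] (H : W → W → Prop), Irreflexive H →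
      (∀ w, α * (Fintype.card W : ℝ) ≤ (outDeg H w : ℝ) ∧
            α * (Fintype.card W : ℝ) ≤ (inDeg H w : ℝ)) → HasCycleLe3 H)
    (hirr : Irreflexive G) (hG : ¬ HasCycleLe3 G) {d : ℕ}
    (hdeg : ∀ v : V, d ≤ outDeg G v ∧ d ≤ inDeg G v) :
    (d : ℝ) < α * Fintype.card V := by
  by_contra! hle
  refine hG (hforce V G hirr fun w => ⟨?_, ?_⟩)
  · exact hle.trans (by exact_mod_cast (hdeg w).1)
  · exact hle.trans (by exact_mod_cast (hdeg w).2)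

section Decidable

variable [DecidableRel G]

theorem card_filter_add_card_filter_lt [DecidableEq V] (hor : Oriented G) {A : Finset V}
    {b : V} (hb : b ∈ A) : #(A.filter (G · b)) + #(A.filter (G b ·)) < #A := by
  have hdisj : Disjoint (A.filter (G · b)) (A.filter (G b ·)) :=
    disjoint_filter.mpr fun a _ hab hba => hor a b hab hba
  rw [← card_union_of_disjoint hdisj]
  refine card_lt_card ⟨union_subset (filter_subset _ _) (filter_subset _ _), fun h => ?_⟩
  rcases mem_union.mp (h hb) with h | h <;> exact hor.irrefl b (mem_filter.mp h).2

/-- An oriented graph on `k` vertices has at most `k(k-1)/2` arcs. -/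
theorem two_mul_sum_card_filter_add_card_le [DecidableEq V] (hor : Oriented G) (A : Finset V) :
    2 * ∑ b ∈ A, #(A.filter (G · b)) + #A ≤ #A * #A := by
  have hswap : ∑ b ∈ A, #(A.filter (G b ·)) = ∑ b ∈ A, #(A.filter (G · b)) :=
    sum_card_bipartiteAbove_eq_sum_card_bipartiteBelow G
  calc 2 * ∑ b ∈ A, #(A.filter (G · b)) + #A
      = ∑ b ∈ A, (#(A.filter (G · b)) + #(A.filter (G b ·)) + 1) := by
        rw [sum_add_distrib, sum_add_distrib, hswap, sum_const, smul_eq_mul, mul_one, two_mul]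
    _ ≤ ∑ _b ∈ A, #A := sum_le_sum fun b hb => card_filter_add_card_filter_lt hor hb
    _ = #A * #A := by rw [sum_const, smul_eq_mul]

variable [Fintype V]

def outNbhd (G : V → V → Prop) [DecidableRel G] (x : V) : Finset V := univ.filter (G x ·)

def inNbhd (G : V → V → Prop) [DecidableRel G] (x : V) : Finset V := univ.filter (G · x)

@[simp] theorem mem_outNbhd {x a : V} : a ∈ outNbhd G x ↔ G x a := by simp [outNbhd]

@[simp] theorem mem_inNbhd {x a : V} : a ∈ inNbhd G x ↔ G a x := by simp [inNbhd]

theorem outDeg_eq_card_outNbhd (x : V) : outDeg G x = #(outNbhd G x) := by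
  rw [outDeg, ← Set.ncard_coe_finset]; congr; ext; simp

theorem inDeg_eq_card_inNbhd (x : V) : inDeg G x = #(inNbhd G x) := by
  rw [inDeg, ← Set.ncard_coe_finset]; congr; ext; simp

/-- Splitting a 4-cycle `x → a → b → y → x` at its opposite vertex `b`. -/
theorem ncard_fourCycleAt_eq_sum [DecidableEq V] (hor : Oriented G) (x : V) :
    {t : V × V × V | FourCycleAt G x t}.ncard
      = ∑ b, #((outNbhd G x).filter (G · b)) * #((inNbhd G x).filter (G b ·)) := by
  have hset : {t : V × V × V | FourCycleAt G x t}
      = ↑(univ.filter fun t : V × V × V => G x t.1 ∧ G t.1 t.2.1 ∧ G t.2.1 t.2.2 ∧ G t.2.2 x) := by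
    ext ⟨a, b, y⟩
    simp only [Set.mem_ofPred_eq, coe_filter, mem_univ, true_and, FourCycleAt]
    refine ⟨fun h => ⟨h.1, h.2.1, h.2.2.1, h.2.2.2.1⟩, fun ⟨h1, h2, h3, h4⟩ => ?_⟩
    refine ⟨h1, h2, h3, h4, ?_, ?_, ?_, ?_, ?_, ?_⟩ <;> rintro rfl
    exacts [hor.irrefl _ h1, hor _ _ h1 h2, hor.irrefl _ h4, hor.irrefl _ h2, hor _ _ h1 h4,
      hor.irrefl _ h3]
  rw [hset, Set.ncard_coe_finset, card_eq_sum_card_fiberwise (f := fun t => t.2.1)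
    (fun _ _ => mem_univ _)]
  refine sum_congr rfl fun b _ => ?_
  rw [← card_product]
  refine card_nbij' (fun t => (t.1, t.2.2)) (fun z => (z.1, b, z.2)) ?_ ?_ ?_ ?_
  · rintro ⟨a, b', y⟩ ht
    simp only [mem_coe, mem_filter, mem_univ, true_and] at ht
    obtain ⟨⟨h1, h2, h3, h4⟩, rfl⟩ := ht
    simp [h1, h2, h3, h4]
  · rintro ⟨a, y⟩ h
    simp_all
  · rintro ⟨a, b', y⟩ ht
    simp only [mem_coe, mem_filter, mem_univ, true_and] at ht
    simp [ht.2]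
  · intro _ _
    rfl

theorem card_mul_le_sum_card_filter {d : ℕ} (hdeg : ∀ a, d ≤ outDeg G a) (A : Finset V) :
    #A * d ≤ ∑ b, #(A.filter (G · b)) := by
  calc #A * d = ∑ _a ∈ A, d := by rw [sum_const, smul_eq_mul]
    _ ≤ ∑ a ∈ A, #(outNbhd G a) := sum_le_sum fun a _ => outDeg_eq_card_outNbhd (G := G) a ▸ hdeg a
    _ = ∑ b, #(A.filter (G · b)) := sum_card_bipartiteAbove_eq_sum_card_bipartiteBelow G

end Decidable

variable [Fintype V]

theorem outDeg_mul_inDeg_mul_le_ncard_fourCycleAt (hor : Oriented G) (htf : ¬ HasTriangle G)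
    {d : ℕ} (hdeg : ∀ v, d ≤ outDeg G v ∧ d ≤ inDeg G v) (x : V) :
    (outDeg G x * inDeg G x : ℝ) * (2 * d - Fintype.card V + (outDeg G x + inDeg G x) / 2 + 2)
      ≤ {t : V × V × V | FourCycleAt G x t}.ncard := by
  classical
  set P := outNbhd G x
  set M := inNbhd G x
  set u : V → ℕ := fun b => #(P.filter (G · b))
  set v : V → ℕ := fun b => #(M.filter (G b ·))
  have hU : #P * d ≤ ∑ b, u b := card_mul_le_sum_card_filter (fun a => (hdeg a).1) P
  have hV : #M * d ≤ ∑ b, v b :=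
    card_mul_le_sum_card_filter (G := fun a b => G b a) (fun a => (hdeg a).2) M
  have hUP : 2 * ∑ b ∈ P, u b + #P ≤ #P * #P := two_mul_sum_card_filter_add_card_le hor P
  have hVM : 2 * ∑ b ∈ M, v b + #M ≤ #M * #M := two_mul_sum_card_filter_add_card_le hor.swap M
  have hxP : x ∉ P := fun h => hor.irrefl x (mem_outNbhd.mp h)
  have hxM : x ∉ M := fun h => hor.irrefl x (mem_inNbhd.mp h)
  have hPM : Disjoint P (insert x M) := disjoint_insert_right.mpr
    ⟨hxP, disjoint_left.mpr fun a haP haM => hor x a (mem_outNbhd.mp haP) (mem_inNbhd.mp haM)⟩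
  have hu_zero : ∀ b ∈ insert x M, u b = 0 := by
    intro b hb
    refine card_eq_zero.mpr (filter_eq_empty_iff.mpr fun a ha hab => ?_)
    rcases mem_insert.mp hb with rfl | hb
    · exact hor _ _ (mem_outNbhd.mp ha) hab
    · exact htf ⟨x, a, b, mem_outNbhd.mp ha, hab, mem_inNbhd.mp hb⟩
  have hv_zero : ∀ b ∈ insert x P, v b = 0 := by
    intro b hb
    refine card_eq_zero.mpr (filter_eq_empty_iff.mpr fun y hy hby => ?_)
    rcases mem_insert.mp hb with rfl | hb
    · exact hor _ _ hby (mem_inNbhd.mp hy)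
    · exact htf ⟨x, b, y, mem_outNbhd.mp hb, hby, mem_inNbhd.mp hy⟩
  -- the slack `f b` is what is lost in `u b * v b ≥ #M * u b + #P * v b - #P * #M`
  set f : V → ℝ := fun b => ((#P : ℝ) - u b) * ((#M : ℝ) - v b)
  have hf_nonneg : ∀ b, 0 ≤ f b := fun b => mul_nonneg
    (sub_nonneg.mpr (by exact_mod_cast card_filter_le _ _))
    (sub_nonneg.mpr (by exact_mod_cast card_filter_le _ _))
  have hslack : ∑ b ∈ P ∪ insert x M, f b ≤ ∑ b, f b :=
    sum_le_sum_of_subset_of_nonneg (subset_univ _) fun b _ _ => hf_nonneg b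
  rw [sum_union hPM, sum_insert hxM] at hslack
  have hfP : ∑ b ∈ P, f b = #M * (#P * #P - ∑ b ∈ P, (u b : ℝ)) := by
    have hf : ∀ b ∈ P, f b = #M * #P - #M * (u b : ℝ) := fun b hb => by
      simp only [f, hv_zero b (mem_insert_of_mem hb)]
      ring
    rw [sum_congr rfl hf, sum_sub_distrib, sum_const, ← mul_sum, nsmul_eq_mul]
    ring
  have hfM : ∑ b ∈ M, f b = #P * (#M * #M - ∑ b ∈ M, (v b : ℝ)) := by
    have hf : ∀ b ∈ M, f b = #P * #M - #P * (v b : ℝ) := fun b hb => by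
      simp only [f, hu_zero b (mem_insert_of_mem hb)]
      ring
    rw [sum_congr rfl hf, sum_sub_distrib, sum_const, ← mul_sum, nsmul_eq_mul]
    ring
  have hfx : f x = #P * #M := by
    simp only [f, hu_zero x (mem_insert_self _ _), hv_zero x (mem_insert_self _ _)]
    ring
  have hf_sum : ∑ b, f b = #P * #M * Fintype.card V - #M * ∑ b, (u b : ℝ)
      - #P * ∑ b, (v b : ℝ) + ∑ b, (u b * v b : ℝ) := by
    simp only [f, sub_mul, mul_sub, sum_sub_distrib, ← mul_sum, ← sum_mul,
      sum_const, card_univ, nsmul_eq_mul]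
    ring
  rw [ncard_fourCycleAt_eq_sum hor, outDeg_eq_card_outNbhd, inDeg_eq_card_inNbhd]
  have hU' : (#P * d : ℝ) ≤ ∑ b, (u b : ℝ) := by exact_mod_cast hU
  have hV' : (#M * d : ℝ) ≤ ∑ b, (v b : ℝ) := by exact_mod_cast hV
  have hUP' : 2 * ∑ b ∈ P, (u b : ℝ) + #P ≤ #P * #P := by exact_mod_cast hUP
  have hVM' : 2 * ∑ b ∈ M, (v b : ℝ) + #M ≤ #M * #M := by exact_mod_cast hVM
  push_cast
  nlinarith [mul_le_mul_of_nonneg_left hU' (Nat.cast_nonneg (α := ℝ) #M),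
    mul_le_mul_of_nonneg_left hV' (Nat.cast_nonneg (α := ℝ) #P),
    mul_le_mul_of_nonneg_left hUP' (Nat.cast_nonneg (α := ℝ) #M),
    mul_le_mul_of_nonneg_left hVM' (Nat.cast_nonneg (α := ℝ) #P)]

theorem two_mul_sq_le_ncard_fourCycleAt (hor : Oriented G) (htf : ¬ HasTriangle G) {d : ℕ}
    (hdeg : ∀ v, d ≤ outDeg G v ∧ d ≤ inDeg G v) (hcard : Fintype.card V ≤ 3 * d) (x : V) :
    2 * d ^ 2 ≤ {t : V × V × V | FourCycleAt G x t}.ncard := by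
  have h := outDeg_mul_inDeg_mul_le_ncard_fourCycleAt hor htf hdeg x
  have hp : (d : ℝ) ≤ outDeg G x := by exact_mod_cast (hdeg x).1
  have hq : (d : ℝ) ≤ inDeg G x := by exact_mod_cast (hdeg x).2
  have hn : (Fintype.card V : ℝ) ≤ 3 * d := by exact_mod_cast hcard
  have hpq : (d : ℝ) ^ 2 ≤ outDeg G x * inDeg G x := by
    rw [sq]; exact mul_le_mul hp hq (Nat.cast_nonneg _) (Nat.cast_nonneg _)
  have hfactor : (2 : ℝ) ≤ 2 * d - Fintype.card V + (outDeg G x + inDeg G x) / 2 + 2 := by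
    linarith
  have key : (2 * d ^ 2 : ℝ) ≤ {t : V × V × V | FourCycleAt G x t}.ncard :=
    calc (2 * d ^ 2 : ℝ) = d ^ 2 * 2 := mul_comm _ _
      _ ≤ _ := mul_le_mul hpq hfactor zero_le_two (by positivity)
      _ ≤ _ := h
  exact_mod_cast key

end FourCycles

theorem cycle_bound_coeff_lt_two {c m : ℝ} (hc1 : 1 / 3 ≤ c) (hc2 : c ≤ 0.3465)
    (hm : 1 < 0.343545 * m) :
    (11 - 15 * c + 7 * c ^ 2 - c ^ 3 - (c ^ 2 - 3 * c + 3) * m) / ((1 - c) ^ 2 * (2 - c)) < 2 := by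
  have hden : 0 < (1 - c) ^ 2 * (2 - c) := by
    have : 0 < 1 - c := by linarith
    have : 0 < 2 - c := by linarith
    positivity
  rw [div_lt_iff₀ hden]
  have h13 : 0 ≤ c - 1 / 3 := by linarith
  have h34 : 0 ≤ 0.3465 - c := by linarith
  have hquad : 0 < (3 - 3 * c + c ^ 2) * (0.343545 * m - 1) :=
    mul_pos (by nlinarith) (by linarith)
  nlinarith [mul_nonneg h13 h34, mul_nonneg (mul_nonneg h13 h34) h34,
    mul_nonneg (mul_nonneg h13 h13) h34, mul_nonneg (mul_nonneg h13 h13) h13,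
    mul_nonneg (mul_nonneg h34 h34) h34]

theorem stmt4_general (c : ℝ) (hc1 : 1 / 3 ≤ c) (hc2 : c ≤ 0.3465)
    (h343 : ∀ (W : Type) [Fintype W] (H : W → W → Prop), Irreflexive H →
      (∀ w, (0.343545 : ℝ) * (Fintype.card W : ℝ) ≤ (outDeg H w : ℝ) ∧
            (0.343545 : ℝ) * (Fintype.card W : ℝ) ≤ (inDeg H w : ℝ)) → HasCycleLe3 H)
    (d : ℕ) (hd : 1 ≤ d)
    (V : Type) [Fintype V] (G : V → V → Prop) (hor : Oriented G)
    (htf : ¬ HasTriangle G)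
    (hdeg : ∀ v : V, d ≤ outDeg G v ∧ d ≤ inDeg G v)
    (m : ℝ) (hm : m = (Fintype.card V : ℝ) / (d : ℝ)) (hm3 : m ≤ 3)
    (x : V) :
    (11 - 15 * c + 7 * c ^ 2 - c ^ 3 - (c ^ 2 - 3 * c + 3) * m) /
        ((1 - c) ^ 2 * (2 - c)) * (d : ℝ)
      < ({t : V × V × V | FourCycleAt G x t}.ncard : ℝ) := by
  have hd_one : (1 : ℝ) ≤ d := by exact_mod_cast hd
  have hd_pos : (0 : ℝ) < d := by linarith
  have hd_lt : (d : ℝ) < 0.343545 * Fintype.card V :=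
    natCast_lt_mul_card_of_not_hasCycleLe3 h343 hor.irrefl
      (not_hasCycleLe3_of_oriented hor htf) hdeg
  have hcard : Fintype.card V ≤ 3 * d := by
    rw [hm, div_le_iff₀ hd_pos] at hm3
    exact_mod_cast hm3
  have hcoeff := cycle_bound_coeff_lt_two (m := m) hc1 hc2 <| by
    rwa [hm, ← mul_div_assoc, one_lt_div hd_pos]
  have hcount := two_mul_sq_le_ncard_fourCycleAt hor htf hdeg hcard x
  calc _ < 2 * (d : ℝ) := mul_lt_mul_of_pos_right hcoeff hd_pos
    _ ≤ 2 * d ^ 2 := by nlinarith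
    _ ≤ _ := by exact_mod_cast hcount

/-- Theorem 1.6 of the paper. -/
theorem stmt4 (c : ℝ) (hc1 : 1 / 3 ≤ c) (hc2 : c ≤ 0.3465) (hadm : Admissible c)
    (h343 : ∀ (W : Type) [Fintype W] (H : W → W → Prop), Irreflexive H →
      (∀ w, (0.343545 : ℝ) * (Fintype.card W : ℝ) ≤ (outDeg H w : ℝ) ∧
            (0.343545 : ℝ) * (Fintype.card W : ℝ) ≤ (inDeg H w : ℝ)) → HasCycleLe3 H)
    (hdiam4 : ∀ (W : Type) [Fintype W] (H : W → W → Prop), Oriented H →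
      (∀ w, (Fintype.card W : ℝ) / 3 ≤ (outDeg H w : ℝ) ∧
            (Fintype.card W : ℝ) / 3 ≤ (inDeg H w : ℝ)) →
      ∀ u v : W, ∃ p ≤ 4, ReachIn H p u v)
    (d : ℕ) (hd : 1 ≤ d)
    (V : Type) [Fintype V] (G : V → V → Prop) (hor : Oriented G)
    (htf : ¬ HasTriangle G)
    (hdeg : ∀ v : V, d ≤ outDeg G v ∧ d ≤ inDeg G v)
    (m : ℝ) (hm : m = (Fintype.card V : ℝ) / (d : ℝ)) (hm3 : m ≤ 3)
    (x : V) :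
    (11 - 15 * c + 7 * c ^ 2 - c ^ 3 - (c ^ 2 - 3 * c + 3) * m) /
        ((1 - c) ^ 2 * (2 - c)) * (d : ℝ)
      < ({t : V × V × V | FourCycleAt G x t}.ncard : ℝ) :=
  stmt4_general c hc1 hc2 h343 d hd V G hor htf hdeg m hm hm3 x
end

section
/- Let D be a triangle-free oriented graph with minimum semi-degree at least d. Let K be a set of k vertices of D, and let (A,B) be a partition of V(D)∖K into two sets such that no arc of D goes from a vertex of B to a vertex of A. Then for every arc (y,x) of D with y ∈ A and x ∈ B, the number of out-neighbors of x lying in B plus the number of in-neighbors of y lying in A is at least 2d − k. -/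
/-- Lemma 2.1 of the paper. -/
theorem stmt7 (V : Type) [Fintype V] (G : V → V → Prop) (hor : Oriented G)
    (htf : ¬ HasTriangle G) (d : ℕ)
    (hdeg : ∀ v : V, d ≤ outDeg G v ∧ d ≤ inDeg G v)
    (K : Set V) (k : ℕ) (hK : K.ncard = k)
    (A B : Set V) (hdisj : Disjoint A B) (hunion : A ∪ B = Kᶜ)
    (hno : ∀ b ∈ B, ∀ a ∈ A, ¬ G b a)
    (y x : V) (hy : y ∈ A) (hx : x ∈ B) (harc : G y x) :
    2 * (d : ℤ) - (k : ℤ) ≤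
      ({z ∈ B | G x z}.ncard : ℤ) + ({z ∈ A | G z y}.ncard : ℤ) := by
  classical
  set T1 : Set V := {z ∈ B | G x z} with hT1
  set T2 : Set V := {z ∈ A | G z y} with hT2
  set U1 : Set V := {z ∈ K | G x z} with hU1
  set U2 : Set V := {z ∈ K | G z y} with hU2
  have hBK : Disjoint B K := by
    rw [Set.disjoint_right]
    intro z hzK hzB
    have : z ∈ Kᶜ := hunion ▸ Set.mem_union_right _ hzB
    exact this hzK
  have hAK : Disjoint A K := by
    rw [Set.disjoint_right]
    intro z hzK hzA
    have : z ∈ Kᶜ := hunion ▸ Set.mem_union_left _ hzA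
    exact this hzK
  have h1 : {z | G x z} = T1 ∪ U1 := by
    ext z
    simp only [hT1, hU1, Set.mem_setOf_eq, Set.mem_union, Set.mem_sep_iff]
    constructor
    · intro hz
      by_cases hzK : z ∈ K
      · exact Or.inr ⟨hzK, hz⟩
      · have : z ∈ A ∪ B := hunion ▸ hzK
        rcases this with hzA | hzB
        · exact absurd hz (hno x hx z hzA)
        · exact Or.inl ⟨hzB, hz⟩
    · rintro (⟨_, hz⟩ | ⟨_, hz⟩) <;> exact hz
  have h2 : {z | G z y} = T2 ∪ U2 := by
    ext z
    simp only [hT2, hU2, Set.mem_setOf_eq, Set.mem_union, Set.mem_sep_iff]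
    constructor
    · intro hz
      by_cases hzK : z ∈ K
      · exact Or.inr ⟨hzK, hz⟩
      · have : z ∈ A ∪ B := hunion ▸ hzK
        rcases this with hzA | hzB
        · exact Or.inl ⟨hzA, hz⟩
        · exact absurd hz (hno z hzB y hy)
    · rintro (⟨_, hz⟩ | ⟨_, hz⟩) <;> exact hz
  have hd1 : Disjoint T1 U1 :=
    (hBK.mono (Set.sep_subset _ _) (Set.sep_subset _ _))
  have hd2 : Disjoint T2 U2 :=
    (hAK.mono (Set.sep_subset _ _) (Set.sep_subset _ _))
  have e1 : outDeg G x = T1.ncard + U1.ncard := by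
    rw [outDeg, h1, Set.ncard_union_eq hd1 (Set.toFinite _) (Set.toFinite _)]
  have e2 : inDeg G y = T2.ncard + U2.ncard := by
    rw [inDeg, h2, Set.ncard_union_eq hd2 (Set.toFinite _) (Set.toFinite _)]
  have hd12 : Disjoint U1 U2 := by
    rw [Set.disjoint_left]
    rintro z ⟨_, hxz⟩ ⟨_, hzy⟩
    exact htf ⟨y, x, z, harc, hxz, hzy⟩
  have hUK : U1.ncard + U2.ncard ≤ k := by
    rw [← Set.ncard_union_eq hd12 (Set.toFinite _) (Set.toFinite _), ← hK]
    exact Set.ncard_le_ncard (Set.union_subset (Set.sep_subset _ _) (Set.sep_subset _ _))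
      (Set.toFinite _)
  have hdx : d ≤ outDeg G x := (hdeg x).1
  have hdy : d ≤ inDeg G y := (hdeg y).2
  rw [e1] at hdx
  rw [e2] at hdy
  omega
end

section
/- Assume c is admissible with 1/3 ≤ c ≤ 0.3465. Let d ≥ 1 be an integer and let D be an oriented graph of minimum semi-degree at least d and order n; put m = n/d and suppose 2.91082 < m < 2/c. If the strong connectivity k(D) satisfies k(D) ≤ ((2 − c·m)/(2 − c))·d, then D contains a triangle. -/
/-- Key application of admissibility: if every vertex of `C` has at least `r`
out-neighbours inside `C` (and `G` is an oriented graph with no triangle),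
then `r < c * |C|`. -/
lemma aux_adm {V : Type} [Fintype V] {c : ℝ} (hc : 0 < c) (hadm : Admissible c)
    {G : V → V → Prop} (hor : Oriented G) (hT : ¬ HasTriangle G)
    {C : Set V} {r : ℝ} (hdeg : ∀ v ∈ C, r ≤ ((C ∩ {y | G v y}).ncard : ℝ)) :
    r < c * C.ncard := by
  by_contra hcon
  push_neg at hcon
  haveI : Fintype ↥C := Fintype.ofFinite _
  have hcard : (Fintype.card ↥C : ℝ) = (C.ncard : ℝ) := by
    rw [← Nat.card_eq_fintype_card, Nat.card_coe_set_eq]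
  set H : ↥C → ↥C → Prop := fun a b => G a.val b.val with hH
  have hirr : Irreflexive H := fun a ha => hor _ _ ha ha
  have hout : ∀ w : ↥C, c * (Fintype.card ↥C : ℝ) ≤ (outDeg H w : ℝ) := by
    intro w
    have himg : Subtype.val '' {y : ↥C | G w.val y.val} = C ∩ {y | G w.val y} := by
      ext v
      constructor
      · rintro ⟨u, hu, rfl⟩; exact ⟨u.2, hu⟩
      · rintro ⟨hvC, hGv⟩; exact ⟨⟨v, hvC⟩, hGv, rfl⟩
    have houtval : outDeg H w = (C ∩ {y | G w.val y}).ncard := by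
      rw [outDeg, ← himg, Set.ncard_image_of_injective _ Subtype.val_injective]
    rw [houtval, hcard]
    exact le_trans hcon (hdeg w.val w.2)
  rcases hadm ↥C H hirr hout with ⟨a, b, hab, hba⟩ | ⟨a, b, e, h1, h2, h3⟩
  · exact hor _ _ hab hba
  · exact hT ⟨a.val, b.val, e.val, h1, h2, h3⟩

/-- Lemma 2.3 of the paper. -/
theorem stmt9 (c : ℝ) (hc1 : 1 / 3 ≤ c) (hc2 : c ≤ 0.3465) (hadm : Admissible c)
    (d : ℕ) (hd : 1 ≤ d)
    (V : Type) [Fintype V] (G : V → V → Prop) (hor : Oriented G)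
    (hdeg : ∀ v : V, d ≤ outDeg G v ∧ d ≤ inDeg G v)
    (m : ℝ) (hm : m = (Fintype.card V : ℝ) / (d : ℝ))
    (hm1 : 2.91082 < m) (hm2 : m < 2 / c)
    (hk : (strongConn G : ℝ) ≤ (2 - c * m) / (2 - c) * (d : ℝ)) :
    HasTriangle G := by
  by_contra hT
  have hdR : (1 : ℝ) ≤ (d : ℝ) := by exact_mod_cast hd
  have hdpos : (0 : ℝ) < (d : ℝ) := by linarith
  have hcpos : (0 : ℝ) < c := by linarith
  have h2c : (0 : ℝ) < 2 - c := by norm_num at hc2 ⊢; linarith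
  have hnd : (Fintype.card V : ℝ) = m * d := by
    rw [hm]; field_simp
  -- |V| ≥ 3, so we can find two distinct vertices
  have hcard3 : (2 : ℝ) < (Fintype.card V : ℝ) := by nlinarith
  have hcard2 : 1 < Fintype.card V := by
    have h : (1 : ℝ) < (Fintype.card V : ℝ) := by linarith
    exact_mod_cast h
  obtain ⟨u, v, huv⟩ := Fintype.exists_pair_of_one_lt_card hcard2
  have hirrG : Irreflexive G := fun a ha => hor _ _ ha ha
  -- the defining set of strongConn is nonempty
  have hnotdel : ∀ p q : V, p ≠ q → ¬ G p q → ¬ DelStrong G (Set.univ \ {p, q}) := by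
    intro p q hpq hG hdel
    have hp : p ∉ Set.univ \ ({p, q} : Set V) := by simp
    have hq : q ∉ Set.univ \ ({p, q} : Set V) := by simp
    have hreach := hdel p hp q hq
    rcases Relation.ReflTransGen.cases_head hreach with h | ⟨b, ⟨hGb, _, hbS⟩, _⟩
    · exact hpq h
    · have hb : b ∈ ({p, q} : Set V) := by
        by_contra hbn
        exact hbS ⟨Set.mem_univ b, hbn⟩
      rcases hb with rfl | rfl
      · exact hirrG _ hGb
      · exact hG hGb
  have hne : {k : ℕ | ∃ S : Set V, S.ncard = k ∧ ¬ DelStrong G S}.Nonempty := by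
    by_cases hGuv : G u v
    · exact ⟨_, Set.univ \ {v, u}, rfl, hnotdel v u (Ne.symm huv) (hor _ _ hGuv)⟩
    · exact ⟨_, Set.univ \ {u, v}, rfl, hnotdel u v huv hGuv⟩
  obtain ⟨S, hScard, hSnd⟩ := Nat.sInf_mem hne
  unfold DelStrong at hSnd
  push_neg at hSnd
  obtain ⟨x, hxS, y, hyS, hxy⟩ := hSnd
  set R : V → V → Prop := fun a b => G a b ∧ a ∉ S ∧ b ∉ S with hR
  set A : Set V := {w | w ∉ S ∧ Relation.ReflTransGen R x w} with hA
  set B : Set V := {w | w ∉ S ∧ ¬ Relation.ReflTransGen R x w} with hB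
  have hxA : x ∈ A := ⟨hxS, Relation.ReflTransGen.refl⟩
  have hyB : y ∈ B := ⟨hyS, hxy⟩
  -- degree bounds
  have hdegA : ∀ a ∈ A, d ≤ (A ∩ {w | G a w}).ncard + S.ncard := by
    intro a ha
    have hsub : {w | G a w} ⊆ (A ∩ {w | G a w}) ∪ S := by
      intro w hw
      by_cases hwS : w ∈ S
      · exact Or.inr hwS
      · exact Or.inl ⟨⟨hwS, ha.2.tail ⟨hw, ha.1, hwS⟩⟩, hw⟩
    calc d ≤ outDeg G a := (hdeg a).1
      _ = {w | G a w}.ncard := rfl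
      _ ≤ ((A ∩ {w | G a w}) ∪ S).ncard := Set.ncard_le_ncard hsub (Set.toFinite _)
      _ ≤ _ := Set.ncard_union_le _ _
  have hdegB : ∀ b ∈ B, d ≤ (B ∩ {w | G w b}).ncard + S.ncard := by
    intro b hb
    have hsub : {w | G w b} ⊆ (B ∩ {w | G w b}) ∪ S := by
      intro w hw
      by_cases hwS : w ∈ S
      · exact Or.inr hwS
      · refine Or.inl ⟨⟨hwS, fun hreach => hb.2 (hreach.tail ⟨hw, hwS, hb.1⟩)⟩, hw⟩
    calc d ≤ inDeg G b := (hdeg b).2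
      _ = {w | G w b}.ncard := rfl
      _ ≤ ((B ∩ {w | G w b}) ∪ S).ncard := Set.ncard_le_ncard hsub (Set.toFinite _)
      _ ≤ _ := Set.ncard_union_le _ _
  -- apply aux lemma to A
  have hA' : (d : ℝ) - (S.ncard : ℝ) < c * A.ncard := by
    refine aux_adm hcpos hadm hor hT ?_
    intro a ha
    have h := hdegA a ha
    have h' : (d : ℝ) ≤ ((A ∩ {w | G a w}).ncard : ℝ) + (S.ncard : ℝ) := by
      exact_mod_cast h
    linarith
  -- apply aux lemma to B with the reversed graph
  have hB' : (d : ℝ) - (S.ncard : ℝ) < c * B.ncard := by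
    have horop : Oriented (fun a b => G b a) := fun a b h h' => hor a b h' h
    have hTop : ¬ HasTriangle (fun a b => G b a) := by
      rintro ⟨a, b, e, h1, h2, h3⟩
      exact hT ⟨a, e, b, h3, h2, h1⟩
    refine aux_adm hcpos hadm horop hTop ?_
    intro b hb
    have h := hdegB b hb
    have h' : (d : ℝ) ≤ ((B ∩ {w | G w b}).ncard : ℝ) + (S.ncard : ℝ) := by
      exact_mod_cast h
    linarith
  -- counting
  have hAB : Disjoint A B := by
    rw [Set.disjoint_left]
    rintro a ⟨_, h⟩ ⟨_, h'⟩
    exact h' h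
  have hABS : Disjoint (A ∪ B) S := by
    rw [Set.disjoint_left]
    rintro a (⟨h, _⟩ | ⟨h, _⟩) hS
    · exact h hS
    · exact h hS
  have hunion : (A ∪ B ∪ S).ncard = A.ncard + B.ncard + S.ncard := by
    rw [Set.ncard_union_eq hABS (Set.toFinite _) (Set.toFinite _),
      Set.ncard_union_eq hAB (Set.toFinite _) (Set.toFinite _)]
  have hle : A.ncard + B.ncard + S.ncard ≤ Fintype.card V := by
    rw [← hunion]
    have h := Set.ncard_le_ncard (Set.subset_univ (A ∪ B ∪ S)) (Set.toFinite _)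
    simpa [Set.ncard_univ, Nat.card_eq_fintype_card] using h
  have hleR : (A.ncard : ℝ) + (B.ncard : ℝ) + (S.ncard : ℝ) ≤ (Fintype.card V : ℝ) := by
    exact_mod_cast hle
  -- the strong connectivity bound
  have hkS : (S.ncard : ℝ) ≤ (2 - c * m) / (2 - c) * d := by rw [hScard]; exact hk
  have h1 : (2 - c) * (S.ncard : ℝ) ≤ (2 - c * m) * d := by
    have := mul_le_mul_of_nonneg_left hkS h2c.le
    calc (2 - c) * (S.ncard : ℝ) ≤ (2 - c) * ((2 - c * m) / (2 - c) * d) := this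
      _ = (2 - c * m) * d := by field_simp
  have hcn : c * (Fintype.card V : ℝ) = c * (m * d) := by rw [hnd]
  nlinarith [mul_le_mul_of_nonneg_left hleR hcpos.le, hA', hB', h1, hcn]
end

section
/- Let D be a strongly connected triangle-free oriented graph of order n whose strong connectivity k satisfies 1 ≤ k ≤ δ⁰(D). Then every vertex x of D lies on at least 2k + d⁺(x) + d⁻(x) + 1 − n directed 4-cycles such that any two of these cycles have only the vertex x in common. -/
/-!
Let `A` and `B` be the out- and in-neighbourhoods of `x` and `R` the set of vertices other than
`x` adjacent to neither. Deleting fewer than `k` vertices leaves `D` strongly connected and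
`|A|, |B| ≥ k`, so every `A`–`B` separator of `D - x` has at least `k` vertices, and Menger's
theorem yields `k` disjoint `A`–`B` paths in `D - x`, each meeting `A` and `B` only at its ends.
By triangle-freeness each path has length at least `2`, so its second and penultimate vertices
lie in `R`. When both equal some `b`, the ends `a` and `c` of the path give the 4-cycle
`x a b c`; otherwise the path uses two vertices of `R`. Hence at least
`2k - |R| = 2k + d⁺(x) + d⁻(x) + 1 - n` of the paths give 4-cycles through `x`, and they pairwise
share only `x`.
-/

/-- The finite sequence `vert 0, …, vert len`; the values of `vert` beyond `len` are ignored. -/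
structure VertexSeq (V : Type*) where
  len : ℕ
  vert : ℕ → V

namespace VertexSeq

variable {V : Type*} {r s : V → V → Prop} {A B : Set V} {w w' : VertexSeq V}

def first (w : VertexSeq V) : V := w.vert 0

def last (w : VertexSeq V) : V := w.vert w.len

def verts (w : VertexSeq V) : Set V := w.vert '' Set.Iic w.len

def IsWalk (r : V → V → Prop) (w : VertexSeq V) : Prop :=
  ∀ i < w.len, r (w.vert i) (w.vert (i + 1))

def IsWalkFromTo (r : V → V → Prop) (A B : Set V) (w : VertexSeq V) : Prop :=
  w.IsWalk r ∧ w.first ∈ A ∧ w.last ∈ B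

def IsTrimmed (A B : Set V) (w : VertexSeq V) : Prop :=
  (∀ i, 0 < i → i ≤ w.len → w.vert i ∉ A) ∧ ∀ i < w.len, w.vert i ∉ B

def take (w : VertexSeq V) (n : ℕ) : VertexSeq V := ⟨n, w.vert⟩

def drop (w : VertexSeq V) (n : ℕ) : VertexSeq V := ⟨w.len - n, fun j => w.vert (n + j)⟩

def cons (a : V) (w : VertexSeq V) : VertexSeq V :=
  ⟨w.len + 1, fun | 0 => a | j + 1 => w.vert j⟩

/-- Concatenation; meaningful when `w.last = w'.first`, the junction vertex being shared. -/
def append (w w' : VertexSeq V) : VertexSeq V :=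
  ⟨w.len + w'.len, fun j => if j < w.len then w.vert j else w'.vert (j - w.len)⟩

theorem mem_verts {a : V} : a ∈ w.verts ↔ ∃ i ≤ w.len, w.vert i = a := by
  simp [verts]

theorem vert_mem_verts {i : ℕ} (h : i ≤ w.len) : w.vert i ∈ w.verts :=
  mem_verts.2 ⟨i, h, rfl⟩

theorem first_mem_verts : w.first ∈ w.verts := vert_mem_verts (Nat.zero_le _)

theorem last_mem_verts : w.last ∈ w.verts := vert_mem_verts le_rfl

theorem verts_take_subset {n : ℕ} (h : n ≤ w.len) : (w.take n).verts ⊆ w.verts := by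
  rintro _ ⟨i, hi, rfl⟩
  exact vert_mem_verts ((Set.mem_Iic.1 hi).trans h)

theorem verts_drop_subset {n : ℕ} (h : n ≤ w.len) : (w.drop n).verts ⊆ w.verts := by
  rintro _ ⟨i, hi, rfl⟩
  exact vert_mem_verts (by simp [drop] at hi; omega)

theorem verts_cons_subset {a : V} : (w.cons a).verts ⊆ insert a w.verts := by
  rintro _ ⟨i | i, hi, rfl⟩
  · exact Set.mem_insert _ _
  · exact Set.mem_insert_of_mem _ (vert_mem_verts (by simp [cons] at hi; omega))

theorem verts_append_subset : (w.append w').verts ⊆ w.verts ∪ w'.verts := by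
  rintro _ ⟨i, hi, rfl⟩
  simp only [append, Set.mem_Iic] at hi ⊢
  split_ifs with h
  · exact Or.inl (vert_mem_verts h.le)
  · exact Or.inr (vert_mem_verts (by omega))

theorem first_append (h : w.last = w'.first) : (w.append w').first = w.first := by
  rcases Nat.eq_zero_or_pos w.len with h₀ | h₀
  · simp only [last, first, h₀] at h
    simp [append, first, h₀, h]
  · simp [append, first, h₀]

theorem last_append : (w.append w').last = w'.last := by
  simp [append, last]

theorem injective_of_mem_verts {ι : Type*} {P : ι → VertexSeq V}
    (hP : Pairwise fun i j => Disjoint (P i).verts (P j).verts) {f : ι → V}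
    (hf : ∀ i, f i ∈ (P i).verts) : Function.Injective f := fun i j h => by
  by_contra hij
  exact Set.disjoint_left.1 (hP hij) (hf i) (h ▸ hf j)

theorem IsWalk.mono (hw : w.IsWalk r) (hrs : ∀ a b, r a b → s a b) : w.IsWalk s :=
  fun i hi => hrs _ _ (hw i hi)

theorem IsWalk.take (hw : w.IsWalk r) {n : ℕ} (h : n ≤ w.len) : (w.take n).IsWalk r :=
  fun i hi => hw i (by simp [VertexSeq.take] at hi; omega)

theorem IsWalk.drop (hw : w.IsWalk r) (n : ℕ) : (w.drop n).IsWalk r := fun i hi => by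
  simpa [VertexSeq.drop, Nat.add_assoc] using hw (n + i) (by simp [VertexSeq.drop] at hi; omega)

theorem IsWalk.cons (hw : w.IsWalk r) {a : V} (ha : r a w.first) : (w.cons a).IsWalk r := by
  rintro (_ | i) hi
  · exact ha
  · exact hw i (by simp [VertexSeq.cons] at hi; omega)

theorem IsWalk.append (hw : w.IsWalk r) (hw' : w'.IsWalk r) (h : w.last = w'.first) :
    (w.append w').IsWalk r := by
  intro i hi
  simp only [VertexSeq.append] at hi ⊢
  by_cases h₁ : i + 1 < w.len
  · rw [if_pos (by omega), if_pos h₁]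
    exact hw i (by omega)
  by_cases h₂ : i < w.len
  · rw [if_pos h₂, if_neg h₁, show i + 1 - w.len = 0 by omega, ← first, ← h, last,
      show w.len = i + 1 by omega]
    exact hw i h₂
  · rw [if_neg h₂, if_neg h₁, show i + 1 - w.len = i - w.len + 1 by omega]
    exact hw' _ (by omega)

theorem IsWalk.forall_vert {p : V → Prop} (hw : w.IsWalk r) (h₀ : p w.first)
    (hr : ∀ a b, r a b → p b) : ∀ i ≤ w.len, p (w.vert i)
  | 0, _ => h₀
  | i + 1, hi => hr _ _ (hw i hi)

theorem exists_isWalk_of_reflTransGen {a b : V} (h : Relation.ReflTransGen r a b) :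
    ∃ w : VertexSeq V, w.IsWalk r ∧ w.first = a ∧ w.last = b := by
  induction h using Relation.ReflTransGen.head_induction_on with
  | refl => exact ⟨⟨0, fun _ => b⟩, fun i hi => absurd hi (Nat.not_lt_zero i), rfl, rfl⟩
  | head hac _ ih =>
    obtain ⟨w, hw, rfl, rfl⟩ := ih
    exact ⟨w.cons _, hw.cons hac, rfl, rfl⟩

theorem exists_link {P Q : VertexSeq V} (hP : P.IsWalk r) (hQ : Q.IsWalk r)
    (h : P.last = Q.first ∨ r P.last Q.first) :
    ∃ R : VertexSeq V, R.IsWalk r ∧ R.first = P.first ∧ R.last = Q.last ∧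
      R.verts ⊆ P.verts ∪ Q.verts := by
  rcases h with h | h
  · exact ⟨P.append Q, hP.append hQ h, first_append h, last_append, verts_append_subset⟩
  · refine ⟨P.append (Q.cons P.last), hP.append (hQ.cons h) rfl, first_append rfl, last_append,
      verts_append_subset.trans (Set.union_subset Set.subset_union_left ?_)⟩
    exact verts_cons_subset.trans
      (Set.insert_subset (Or.inl last_mem_verts) Set.subset_union_right)

/-- Cut the walk at its first visit to `B`, then keep the part after its last visit to `A`. -/
theorem IsWalkFromTo.exists_trimmed (h : w.IsWalkFromTo r A B) :
    ∃ w' : VertexSeq V, w'.IsWalkFromTo r A B ∧ w'.IsTrimmed A B ∧ w'.verts ⊆ w.verts := by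
  classical
  obtain ⟨hw, hA, hB⟩ := h
  have hex : ∃ n, n ≤ w.len ∧ w.vert n ∈ B := ⟨w.len, le_rfl, hB⟩
  obtain ⟨hn, hnB⟩ := Nat.find_spec hex
  set n := Nat.find hex
  set m := Nat.findGreatest (fun m => w.vert m ∈ A) n
  have hmA : w.vert m ∈ A :=
    Nat.findGreatest_spec (P := fun m => w.vert m ∈ A) (Nat.zero_le n) hA
  have hmn : m ≤ n := Nat.findGreatest_le n
  refine ⟨(w.take n).drop m, ⟨(hw.take hn).drop m, hmA, ?_⟩, ⟨?_, ?_⟩,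
    (verts_drop_subset hmn).trans (verts_take_subset hn)⟩
  · simpa [last, drop, take, Nat.add_sub_cancel' hmn] using hnB
  · intro i hi hi' hiA
    simp only [drop, take] at hi' hiA
    exact Nat.findGreatest_is_greatest (P := fun m => w.vert m ∈ A) (n := n) (k := m + i)
      (by omega) (by omega) hiA
  · intro i hi hiB
    simp only [drop, take] at hi hiB
    exact Nat.find_min hex (by omega) ⟨by omega, hiB⟩

theorem exists_pairwise_disjoint_trimmed {ι : Type*} {P : ι → VertexSeq V}
    (hP : ∀ i, (P i).IsWalkFromTo r A B)
    (hPd : Pairwise fun i j => Disjoint (P i).verts (P j).verts) :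
    ∃ P' : ι → VertexSeq V, (∀ i, (P' i).IsWalkFromTo r A B) ∧
      (∀ i, (P' i).IsTrimmed A B) ∧ Pairwise fun i j => Disjoint (P' i).verts (P' j).verts := by
  choose P' hP' ht hsub using fun i => (hP i).exists_trimmed
  exact ⟨P', hP', ht, fun i j hij => (hPd hij).mono (hsub i) (hsub j)⟩

end VertexSeq

open VertexSeq

section Menger

variable {V : Type*} {r : V → V → Prop} {A B S T : Set V} {u v : V}

def Separates (r : V → V → Prop) (A B S : Set V) : Prop :=
  ∀ w : VertexSeq V, w.IsWalkFromTo r A B → ∃ i ≤ w.len, w.vert i ∈ S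

def eraseArc (r : V → V → Prop) (u v : V) : V → V → Prop :=
  fun a b => r a b ∧ (a, b) ≠ (u, v)

theorem ncard_eraseArc_lt [Finite V] (huv : r u v) :
    {p : V × V | eraseArc r u v p.1 p.2}.ncard < {p : V × V | r p.1 p.2}.ncard := by
  have : {p : V × V | eraseArc r u v p.1 p.2} = {p : V × V | r p.1 p.2} \ {(u, v)} := by
    ext p
    simp [eraseArc]
  rw [this]
  exact Set.ncard_sdiff_singleton_lt_of_mem huv

namespace Separates

theorem exists_take_of_eraseArc (hS : Separates (eraseArc r u v) A B S) {w : VertexSeq V}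
    (hw : w.IsWalkFromTo r A B) :
    ∃ c ≤ w.len, w.vert c ∈ insert u S ∧ (w.take c).IsWalk (eraseArc r u v) := by
  classical
  have hex : ∃ c, c ≤ w.len ∧ w.vert c ∈ insert u S := by
    by_cases hu : ∃ c ≤ w.len, w.vert c = u
    · obtain ⟨c, hc, hcu⟩ := hu
      exact ⟨c, hc, Or.inl hcu⟩
    push Not at hu
    obtain ⟨c, hc, hcS⟩ := hS w
      ⟨fun i hi => ⟨hw.1 i hi, fun h => hu i hi.le (Prod.ext_iff.1 h).1⟩, hw.2⟩
    exact ⟨c, hc, Or.inr hcS⟩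
  obtain ⟨hc, hcX⟩ := Nat.find_spec hex
  refine ⟨Nat.find hex, hc, hcX, fun i hi => ?_⟩
  simp only [take] at hi ⊢
  exact ⟨hw.1 i (by omega),
    fun h => Nat.find_min hex hi ⟨by omega, Or.inl (Prod.ext_iff.1 h).1⟩⟩

theorem exists_drop_of_eraseArc (hS : Separates (eraseArc r u v) A B S) {w : VertexSeq V}
    (hw : w.IsWalkFromTo r A B) :
    ∃ c ≤ w.len, w.vert c ∈ insert v S ∧ (w.drop c).IsWalk (eraseArc r u v) := by
  classical
  have hex : ∃ c, c ≤ w.len ∧ w.vert c ∈ insert v S := by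
    by_cases hv : ∃ c ≤ w.len, w.vert c = v
    · obtain ⟨c, hc, hcv⟩ := hv
      exact ⟨c, hc, Or.inl hcv⟩
    push Not at hv
    obtain ⟨c, hc, hcS⟩ := hS w
      ⟨fun i hi => ⟨hw.1 i hi, fun h => hv (i + 1) hi (Prod.ext_iff.1 h).2⟩, hw.2⟩
    exact ⟨c, hc, Or.inr hcS⟩
  obtain ⟨c, hc, hcY⟩ := hex
  set P := fun c => w.vert c ∈ insert v S
  set c₀ := Nat.findGreatest P w.len
  have hle : c₀ ≤ w.len := Nat.findGreatest_le _
  refine ⟨c₀, hle, Nat.findGreatest_spec (P := P) hc hcY, fun i hi => ?_⟩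
  simp only [drop] at hi ⊢
  refine ⟨by simpa [Nat.add_assoc] using hw.1 (c₀ + i) (by omega), fun h => ?_⟩
  exact Nat.findGreatest_is_greatest (P := P) (n := w.len) (k := c₀ + (i + 1)) (by omega)
    (by omega) (Or.inl (Prod.ext_iff.1 h).2)

theorem insert_snd (hS : Separates (eraseArc r u v) A B S) : Separates r A B (insert v S) :=
  fun _ hw => let ⟨c, hc, hcY, _⟩ := hS.exists_drop_of_eraseArc hw; ⟨c, hc, hcY⟩

theorem of_separates_insert_fst (hS : Separates (eraseArc r u v) A B S)
    (hT : Separates (eraseArc r u v) A (insert u S) T) : Separates r A B T := by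
  intro w hw
  obtain ⟨c, hc, hcX, hwc⟩ := hS.exists_take_of_eraseArc hw
  obtain ⟨i, hi, hiT⟩ := hT (w.take c) ⟨hwc, hw.2.1, hcX⟩
  exact ⟨i, hi.trans hc, hiT⟩

theorem of_separates_insert_snd (hS : Separates (eraseArc r u v) A B S)
    (hT : Separates (eraseArc r u v) (insert v S) B T) : Separates r A B T := by
  intro w hw
  obtain ⟨c, hc, hcY, hwc⟩ := hS.exists_drop_of_eraseArc hw
  obtain ⟨i, hi, hiT⟩ := hT (w.drop c) ⟨hwc, by simpa [first, drop] using hcY,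
    by simpa [last, drop, Nat.add_sub_cancel' hc] using hw.2.2⟩
  exact ⟨c + i, by simp only [drop] at hi; omega, hiT⟩

/-- Any other common vertex would let one splice `P` and `Q` into an `A`–`B` walk avoiding `S`. -/
theorem mem_of_mem_verts (hS : Separates r A B S) {P Q : VertexSeq V} (hP : P.IsWalk r)
    (hPA : P.first ∈ A) (hPS : ∀ i < P.len, P.vert i ∉ S) (hQ : Q.IsWalk r)
    (hQB : Q.last ∈ B) (hQS : ∀ i, 0 < i → i ≤ Q.len → Q.vert i ∉ S) {a : V}
    (haP : a ∈ P.verts) (haQ : a ∈ Q.verts) : a ∈ S ∧ a = P.last ∧ a = Q.first := by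
  obtain ⟨i, hi, rfl⟩ := mem_verts.1 haP
  obtain ⟨j, hj, hji⟩ := mem_verts.1 haQ
  have hjoin : (P.take i).last = (Q.drop j).first := by simp [last, first, take, drop, hji]
  obtain ⟨c, hc, hcS⟩ := hS ((P.take i).append (Q.drop j))
    ⟨(hP.take hi).append (hQ.drop j) hjoin, by rwa [first_append hjoin],
      by rw [last_append]; simpa [last, drop, Nat.add_sub_cancel' hj] using hQB⟩
  simp only [append, take, drop] at hc hcS
  by_cases hci : c < i
  · simp only [hci, if_true] at hcS
    exact absurd hcS (hPS c (by omega))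
  simp only [hci, if_false] at hcS
  have hj0 : j + (c - i) = 0 := by
    by_contra h
    exact hQS _ (by omega) (by omega) hcS
  have hiS : P.vert i ∈ S := by rwa [← hji, show j = j + (c - i) by omega]
  refine ⟨hiS, ?_, by rw [← hji, show j = 0 by omega]; rfl⟩
  rw [show i = P.len by by_contra h; exact hPS i (by omega) hiS]
  rfl

end Separates

theorem exists_injective_matching [DecidableEq V] {k : ℕ} {S : Finset V} (hv : v ∉ S)
    (hk : S.card < k) {f g : Fin k → V} (hf : Function.Injective f)
    (hfS : ∀ i, f i ∈ insert u (S : Set V)) (hg : Function.Injective g)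
    (hgS : ∀ i, g i ∈ insert v (S : Set V)) :
    ∃ π : Fin k → Fin k, Function.Injective π ∧
      ∀ i, g (π i) = if f i = u then v else f i := by
  set m : V → V := fun y => if y = u then v else y
  have hm_mem : ∀ y ∈ insert u (S : Set V), m y ∈ insert v (S : Set V) := by
    rintro y (rfl | hy)
    · simp [m]
    · by_cases hyu : y = u <;> simp [m, hyu, hy]
  have hm_inj : Set.InjOn m (insert u (S : Set V)) := by
    intro y hy y' hy' h
    by_cases hyu : y = u <;> by_cases hy'u : y' = u <;>
      simp only [m, hyu, hy'u, if_true, if_false] at h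
    · exact hyu.trans hy'u.symm
    · exact absurd (h ▸ hy'.resolve_left hy'u) hv
    · exact absurd (h ▸ hy.resolve_left hyu) hv
    · exact h
  have hsurj := Finset.surjOn_of_injOn_of_card_le (s := Finset.univ) (t := insert v S) g
    (fun j _ => by simpa using hgS j) hg.injOn
    (by simpa using (Finset.card_insert_le v S).trans hk)
  choose π hπ using fun i => hsurj (by simpa using hm_mem _ (hfS i))
  exact ⟨π, fun i j h => hf (hm_inj (hfS i) (hfS j) (by simp only [← (hπ _).2, h])),
    fun i => (hπ i).2⟩

namespace Separates

/-- The inductive step of Menger's theorem: the walks `P` and `Q` are joined through the arc `uv`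
for the walk ending at `u` and at a shared vertex of `S` for the others. -/
theorem exists_pairwise_disjoint_walks_of_eraseArc {k : ℕ} {S : Finset V} (huv : r u v)
    (hS : Separates (eraseArc r u v) A B S) (hv : v ∉ S) (hk : S.card < k)
    {P Q : Fin k → VertexSeq V} (hP : ∀ i, (P i).IsWalkFromTo (eraseArc r u v) A (insert u S))
    (hPt : ∀ i, (P i).IsTrimmed A (insert u S))
    (hPd : Pairwise fun i j => Disjoint (P i).verts (P j).verts)
    (hQ : ∀ i, (Q i).IsWalkFromTo (eraseArc r u v) (insert v S) B)
    (hQt : ∀ i, (Q i).IsTrimmed (insert v S) B)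
    (hQd : Pairwise fun i j => Disjoint (Q i).verts (Q j).verts) :
    ∃ R : Fin k → VertexSeq V, (∀ i, (R i).IsWalkFromTo r A B) ∧
      Pairwise fun i j => Disjoint (R i).verts (R j).verts := by
  classical
  have hmeet : ∀ i j a, a ∈ (P i).verts → a ∈ (Q j).verts →
      a ∈ S ∧ a = (P i).last ∧ a = (Q j).first := fun i j _ =>
    hS.mem_of_mem_verts (hP i).1 (hP i).2.1 (fun n hn h => (hPt i).2 n hn (Or.inr h))
      (hQ j).1 (hQ j).2.2 (fun n hn hn' h => (hQt j).1 n hn hn' (Or.inr h))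
  have hlast := injective_of_mem_verts hPd fun i => last_mem_verts
  obtain ⟨π, hπ_inj, hπ⟩ := exists_injective_matching hv hk hlast (fun i => (hP i).2.2)
    (injective_of_mem_verts hQd fun i => first_mem_verts) (fun i => (hQ i).2.1)
  have hcross : ∀ i j a, a ∈ (P i).verts → a ∈ (Q (π j)).verts → i = j := by
    intro i j a hai haj
    obtain ⟨haS, hai, haj⟩ := hmeet i _ a hai haj
    have hma : (if (P j).last = u then v else (P j).last) = a := by rw [← hπ j, haj]
    have hju : (P j).last ≠ u := fun h => hv (by simp_all)
    exact hlast (hai.symm.trans (hma.symm.trans (if_neg hju)))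
  have hlink : ∀ i, ∃ R : VertexSeq V, R.IsWalk r ∧ R.first = (P i).first ∧
      R.last = (Q (π i)).last ∧ R.verts ⊆ (P i).verts ∪ (Q (π i)).verts := fun i => by
    refine exists_link ((hP i).1.mono fun _ _ h => h.1) ((hQ _).1.mono fun _ _ h => h.1) ?_
    rw [hπ i]
    by_cases hu : (P i).last = u
    · exact Or.inr (by simpa [hu] using huv)
    · exact Or.inl (if_neg hu).symm
  choose R hR hRfirst hRlast hRsub using hlink
  refine ⟨R, fun i => ⟨hR i, hRfirst i ▸ (hP i).2.1, hRlast i ▸ (hQ _).2.2⟩,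
    fun i j hij => Set.disjoint_left.2 fun a hai haj => ?_⟩
  rcases hRsub i hai with hPi | hQi <;> rcases hRsub j haj with hPj | hQj
  · exact Set.disjoint_left.1 (hPd hij) hPi hPj
  · exact hij (hcross i j a hPi hQj)
  · exact hij (hcross j i a hPj hQi).symm
  · exact Set.disjoint_left.1 (hQd (hπ_inj.ne hij)) hQi hQj

end Separates

theorem separates_inter_of_forall_not (harc : ∀ a b, ¬ r a b) : Separates r A B (A ∩ B) := by
  intro w hw
  have hw0 : w.len = 0 := by
    by_contra h0
    exact harc _ _ (hw.1 0 (by omega))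
  exact ⟨0, Nat.zero_le _, by simpa [first, last, hw0] using And.intro hw.2.1 hw.2.2⟩

theorem exists_pairwise_disjoint_trivial_walks {k : ℕ} {S : Finset V} (hk : k ≤ S.card)
    (hS : ↑S ⊆ A ∩ B) :
    ∃ P : Fin k → VertexSeq V, (∀ i, (P i).IsWalkFromTo r A B) ∧
      Pairwise fun i j => Disjoint (P i).verts (P j).verts := by
  obtain ⟨f⟩ : Nonempty (Fin k ↪ S) :=
    Function.Embedding.nonempty_of_card_le (by simpa using hk)
  refine ⟨fun i => ⟨0, fun _ => f i⟩, fun i => ⟨fun _ h => absurd h (Nat.not_lt_zero _),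
    (hS (f i).2).1, (hS (f i).2).2⟩, fun i j hij => Set.disjoint_left.2 ?_⟩
  rintro _ ⟨_, -, rfl⟩ ⟨_, -, h⟩
  exact hij (f.injective (Subtype.ext h.symm))

/-- Menger's theorem, proved by induction on the number of arcs. -/
theorem exists_pairwise_disjoint_walks [Finite V] (r : V → V → Prop) (A B : Set V) (k : ℕ)
    (h : ∀ S : Finset V, Separates r A B S → k ≤ S.card) :
    ∃ P : Fin k → VertexSeq V, (∀ i, (P i).IsWalkFromTo r A B) ∧
      Pairwise fun i j => Disjoint (P i).verts (P j).verts := by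
  classical
  induction hn : {p : V × V | r p.1 p.2}.ncard using Nat.strong_induction_on
    generalizing r A B with
  | _ n ih =>
  by_cases harc : ∃ u v, r u v
  swap
  · push Not at harc
    have hAB := Set.toFinite (A ∩ B)
    exact exists_pairwise_disjoint_trivial_walks
      (h hAB.toFinset (by simpa using separates_inter_of_forall_not harc)) (by simp)
  obtain ⟨u, v, huv⟩ := harc
  have hlt := hn ▸ ncard_eraseArc_lt huv
  by_cases h' : ∀ S : Finset V, Separates (eraseArc r u v) A B S → k ≤ S.card
  · obtain ⟨P, hP, hPd⟩ := ih _ hlt _ A B h' rfl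
    exact ⟨P, fun i => ⟨(hP i).1.mono fun _ _ h => h.1, (hP i).2⟩, hPd⟩
  push Not at h'
  obtain ⟨S, hS, hSk⟩ := h'
  have hv : v ∉ S := fun hv => by
    have := h (insert v S) (by simpa using hS.insert_snd)
    rw [Finset.insert_eq_of_mem hv] at this
    omega
  obtain ⟨P, hP, hPd⟩ := ih _ hlt _ A (insert u S)
    (fun T hT => h T (hS.of_separates_insert_fst hT)) rfl
  obtain ⟨P', hP', hP't, hP'd⟩ := exists_pairwise_disjoint_trimmed hP hPd
  obtain ⟨Q, hQ, hQd⟩ := ih _ hlt _ (insert v S) B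
    (fun T hT => h T (hS.of_separates_insert_snd hT)) rfl
  obtain ⟨Q', hQ', hQ't, hQ'd⟩ := exists_pairwise_disjoint_trimmed hQ hQd
  exact hS.exists_pairwise_disjoint_walks_of_eraseArc huv hv hSk hP' hP't hP'd hQ' hQ't hQ'd

end Menger

theorem sum_card_pair_add_card_filter_eq {ι α : Type*} [Fintype ι] [DecidableEq α]
    (f g : ι → α) :
    ∑ i, ({f i, g i} : Finset α).card + (Finset.univ.filter fun i => f i = g i).card =
      2 * Fintype.card ι := by
  rw [Finset.card_filter, ← Finset.sum_add_distrib]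
  have h : ∀ i, ({f i, g i} : Finset α).card + (if f i = g i then 1 else 0) = 2 := fun i => by
    by_cases hfg : f i = g i <;> simp [hfg]
  simp [h, mul_comm]

section OrientedGraph

variable {V : Type} {G : V → V → Prop} {x : V}

def deleteVertex (G : V → V → Prop) (x : V) : V → V → Prop :=
  fun a b => G a b ∧ a ≠ x ∧ b ≠ x

def nonNbrs (G : V → V → Prop) (x : V) : Set V := {y | y ≠ x ∧ ¬ G x y ∧ ¬ G y x}

theorem ncard_nonNbrs_add [Finite V] (hor : Oriented G) :
    (nonNbrs G x).ncard + (outDeg G x + inDeg G x + 1) = Nat.card V := by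
  have hR : nonNbrs G x = (insert x ({y | G x y} ∪ {y | G y x}))ᶜ := by
    ext y
    simp [nonNbrs, not_or]
  have hAB : Disjoint {y | G x y} {y | G y x} := Set.disjoint_left.2 fun y h h' => hor x y h h'
  have hx : x ∉ {y | G x y} ∪ {y | G y x} := fun h => h.elim (fun h => hor x x h h)
    fun h => hor x x h h
  rw [hR, ← Set.ncard_add_ncard_compl (insert x ({y | G x y} ∪ {y | G y x})), add_comm,
    Set.ncard_insert_of_notMem hx, Set.ncard_union_eq hAB, outDeg, inDeg]

theorem minSemiDeg_le_min (x : V) : minSemiDeg G ≤ min (outDeg G x) (inDeg G x) :=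
  Nat.sInf_le ⟨x, rfl⟩

theorem delStrong_of_card_lt_strongConn {S : Finset V} (h : S.card < strongConn G) :
    DelStrong G S := by
  by_contra hS
  have : strongConn G ≤ S.card := Nat.sInf_le ⟨(S : Set V), Set.ncard_coe_finset S, hS⟩
  omega

theorem cycVertsAt_inter_eq_singleton {t t' : V × V × V} {s s' : Set V}
    (ht : cycVertsAt x t ⊆ insert x s) (ht' : cycVertsAt x t' ⊆ insert x s')
    (hd : Disjoint s s') : cycVertsAt x t ∩ cycVertsAt x t' = {x} := by
  refine Set.eq_singleton_iff_unique_mem.2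
    ⟨⟨Or.inl rfl, Or.inl rfl⟩, fun a ⟨ha, ha'⟩ => ?_⟩
  rcases ht ha with rfl | ha
  · rfl
  rcases ht' ha' with rfl | ha'
  · rfl
  exact absurd ha' (Set.disjoint_left.1 hd ha)

/-- If `|S| < k` then `G - S` is strongly connected, and the part after its last visit to `x` of a
walk of `G - S` from an out-neighbour to an in-neighbour of `x` would avoid `S`. -/
theorem le_card_of_separates (hor : Oriented G) {k : ℕ} (hkG : k ≤ strongConn G)
    (hkout : k ≤ outDeg G x) (hkin : k ≤ inDeg G x) {S : Finset V}
    (hS : Separates (deleteVertex G x) {y | G x y} {y | G y x} S) : k ≤ S.card := by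
  by_contra! hlt
  obtain ⟨a, haA, haS⟩ := Set.exists_mem_notMem_of_ncard_lt_ncard (s := (S : Set V))
    (t := {y | G x y}) (by rw [Set.ncard_coe_finset]; exact hlt.trans_le hkout)
  obtain ⟨c, hcB, hcS⟩ := Set.exists_mem_notMem_of_ncard_lt_ncard (s := (S : Set V))
    (t := {y | G y x}) (by rw [Set.ncard_coe_finset]; exact hlt.trans_le hkin)
  obtain ⟨w, hw, rfl, rfl⟩ := exists_isWalk_of_reflTransGen
    (delStrong_of_card_lt_strongConn (hlt.trans_le hkG) _ haS _ hcS)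
  have hwS : ∀ i ≤ w.len, w.vert i ∉ S := hw.forall_vert haS fun _ _ h => h.2.2
  obtain ⟨w', ⟨hw', hw'A, hw'B⟩, htrim, hsub⟩ :=
    IsWalkFromTo.exists_trimmed (A := insert x {y | G x y}) (B := {y | G y x})
      ⟨hw.mono fun _ _ h => h.1, Or.inr haA, hcB⟩
  have hfirst : G x w'.first := by
    rcases hw'A with h | h
    · have hlen : 0 < w'.len := Nat.pos_of_ne_zero fun h0 => by
        simp only [last, first, h0] at hw'B h
        exact hor x x (h ▸ hw'B) (h ▸ hw'B)
      exact absurd (Or.inr (h ▸ hw' 0 hlen)) (htrim.1 1 one_pos hlen)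
    · exact h
  have hx : ∀ i ≤ w'.len, w'.vert i ≠ x := by
    rintro (_ | i) hi h
    · exact hor x x (h ▸ hfirst) (h ▸ hfirst)
    · exact htrim.1 (i + 1) (by omega) hi (Or.inl h)
  obtain ⟨i, hi, hiS⟩ :=
    hS w' ⟨fun i hi => ⟨hw' i hi, hx i hi.le, hx (i + 1) hi⟩, hfirst, hw'B⟩
  obtain ⟨j, hj, hji⟩ := mem_verts.1 (hsub (vert_mem_verts hi))
  exact hwS j hj (hji ▸ hiS)

section TrimmedWalk

variable {w : VertexSeq V} (hw : w.IsWalkFromTo (deleteVertex G x) {y | G x y} {y | G y x})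
include hw

theorem VertexSeq.two_le_len (hor : Oriented G) (htf : ¬ HasTriangle G) : 2 ≤ w.len := by
  obtain ⟨hw, hA, hB⟩ := hw
  unfold last at hB
  by_contra! h
  obtain h | h : w.len = 0 ∨ w.len = 1 := by omega
  · rw [h] at hB
    exact hor x w.first hA hB
  · rw [h] at hB
    exact htf ⟨x, _, _, hA, (hw 0 (by omega)).1, hB⟩

theorem VertexSeq.vert_mem_nonNbrs (ht : w.IsTrimmed {y | G x y} {y | G y x}) {i : ℕ}
    (hi : 0 < i) (hi' : i < w.len) : w.vert i ∈ nonNbrs G x :=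
  ⟨(hw.1 i hi').2.1, ht.1 i hi hi'.le, ht.2 i hi'⟩

theorem VertexSeq.fourCycleAt (ht : w.IsTrimmed {y | G x y} {y | G y x}) (hor : Oriented G)
    (htf : ¬ HasTriangle G) (h : w.vert 1 = w.vert (w.len - 1)) :
    FourCycleAt G x (w.first, w.vert 1, w.last) := by
  have hlen := two_le_len hw hor htf
  obtain ⟨hbx, hb, hb'⟩ := vert_mem_nonNbrs hw ht one_pos (by omega)
  obtain ⟨hwalk, hA, hB⟩ := hw
  have hlast : G (w.vert 1) w.last := by
    simpa [h, last, Nat.sub_add_cancel (by omega : 1 ≤ w.len)] using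
      (hwalk (w.len - 1) (by omega)).1
  refine ⟨hA, (hwalk 0 (by omega)).1, hlast, hB, ?_, hbx.symm, ?_, ?_, ?_, ?_⟩ <;>
    dsimp only <;> intro h
  · exact hor x x (h ▸ hA) (h ▸ hA)
  · exact hor x x (h ▸ hB) (h ▸ hB)
  · exact hb (h ▸ hA)
  · exact hor x _ hA (h ▸ hB)
  · exact hb' (h ▸ hB)

end TrimmedWalk

theorem exists_fourCycleAt_finset [Finite V] (hor : Oriented G) (htf : ¬ HasTriangle G) {k : ℕ}
    {P : Fin k → VertexSeq V}
    (hP : ∀ i, (P i).IsWalkFromTo (deleteVertex G x) {y | G x y} {y | G y x})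
    (ht : ∀ i, (P i).IsTrimmed {y | G x y} {y | G y x})
    (hPd : Pairwise fun i j => Disjoint (P i).verts (P j).verts) :
    ∃ T : Finset (V × V × V), 2 * k ≤ T.card + (nonNbrs G x).ncard ∧
      (∀ t ∈ T, FourCycleAt G x t) ∧
      ∀ t ∈ T, ∀ t' ∈ T, t ≠ t' → cycVertsAt x t ∩ cycVertsAt x t' = {x} := by
  classical
  have hlen i := two_le_len (hP i) hor htf
  set b : Fin k → V := fun i => (P i).vert 1
  set c : Fin k → V := fun i => (P i).vert ((P i).len - 1)
  have hbc : ∀ i, (({b i, c i} : Finset V) : Set V) ⊆ (P i).verts ∩ nonNbrs G x := fun i => by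
    have := hlen i
    simp only [Finset.coe_insert, Finset.coe_singleton, Set.insert_subset_iff,
      Set.singleton_subset_iff]
    exact ⟨⟨vert_mem_verts (by omega), vert_mem_nonNbrs (hP i) (ht i) one_pos (by omega)⟩,
      ⟨vert_mem_verts (by omega), vert_mem_nonNbrs (hP i) (ht i) (by omega) (by omega)⟩⟩
  have hsum : ∑ i, ({b i, c i} : Finset V).card ≤ (nonNbrs G x).ncard := by
    rw [← Finset.card_biUnion fun i _ j _ hij => Finset.disjoint_coe.1
      ((hPd hij).mono ((hbc i).trans Set.inter_subset_left) ((hbc j).trans Set.inter_subset_left)),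
      ← Set.ncard_coe_finset]
    refine Set.ncard_le_ncard ?_
    simpa using fun i => (hbc i).trans Set.inter_subset_right
  have hfirst := injective_of_mem_verts hPd fun i => first_mem_verts
  refine ⟨(Finset.univ.filter fun i => b i = c i).image fun i => ((P i).first, b i, (P i).last),
    ?_, ?_, ?_⟩
  · rw [Finset.card_image_of_injective _ fun i j h => hfirst (congrArg Prod.fst h)]
    have := sum_card_pair_add_card_filter_eq b c
    simp only [Fintype.card_fin] at this
    omega
  all_goals simp only [Finset.mem_image, Finset.mem_filter, Finset.mem_univ, true_and]
  · rintro _ ⟨i, hi, rfl⟩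
    exact fourCycleAt (hP i) (ht i) hor htf hi
  · rintro _ ⟨i, -, rfl⟩ _ ⟨j, -, rfl⟩ hij
    have hsub l : cycVertsAt x ((P l).first, b l, (P l).last) ⊆ insert x (P l).verts :=
      Set.insert_subset_insert (Set.insert_subset_iff.2 ⟨first_mem_verts,
        Set.insert_subset_iff.2 ⟨vert_mem_verts (by have := hlen l; omega),
          Set.singleton_subset_iff.2 last_mem_verts⟩⟩)
    exact cycVertsAt_inter_eq_singleton (hsub i) (hsub j) (hPd fun h => hij (h ▸ rfl))

end OrientedGraph

theorem stmt10_general (V : Type) [Fintype V] (G : V → V → Prop) (hor : Oriented G)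
    (htf : ¬ HasTriangle G)
    (k : ℕ) (hk : strongConn G = k) (hk2 : k ≤ minSemiDeg G)
    (x : V) :
    ∃ T : Finset (V × V × V),
      2 * (k : ℤ) + (outDeg G x : ℤ) + (inDeg G x : ℤ) + 1 - (Fintype.card V : ℤ)
          ≤ (T.card : ℤ) ∧
      (∀ t ∈ T, FourCycleAt G x t) ∧
      ∀ t ∈ T, ∀ t' ∈ T, t ≠ t' → cycVertsAt x t ∩ cycVertsAt x t' = {x} := by
  obtain ⟨hout, hin⟩ := le_min_iff.1 (hk2.trans (minSemiDeg_le_min x))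
  obtain ⟨P, hP, hPd⟩ := exists_pairwise_disjoint_walks (deleteVertex G x) _ _ k
    fun S hS => le_card_of_separates hor hk.ge hout hin hS
  obtain ⟨P', hP', ht, hP'd⟩ := exists_pairwise_disjoint_trimmed hP hPd
  obtain ⟨T, hT, hcyc, hdisj⟩ := exists_fourCycleAt_finset hor htf hP' ht hP'd
  have hcard := ncard_nonNbrs_add hor (x := x)
  rw [Nat.card_eq_fintype_card] at hcard
  exact ⟨T, by omega, hcyc, hdisj⟩

/-- The counting step in the proof of Theorem 1.5. -/
theorem stmt10 (V : Type) [Fintype V] (G : V → V → Prop) (hor : Oriented G)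
    (htf : ¬ HasTriangle G) (hstrong : StronglyConnected G)
    (k : ℕ) (hk : strongConn G = k) (hk1 : 1 ≤ k) (hk2 : k ≤ minSemiDeg G)
    (x : V) :
    ∃ T : Finset (V × V × V),
      2 * (k : ℤ) + (outDeg G x : ℤ) + (inDeg G x : ℤ) + 1 - (Fintype.card V : ℤ)
          ≤ (T.card : ℤ) ∧
      (∀ t ∈ T, FourCycleAt G x t) ∧
      ∀ t ∈ T, ∀ t' ∈ T, t ≠ t' → cycVertsAt x t ∩ cycVertsAt x t' = {x} :=
  stmt10_general V G hor htf k hk hk2 x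
end
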